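/- Lovász Local Lemma (variable version, finite symmetric form): Let X be a finite set, q ≥ 1, and let 𝓑 be a finite collection of constraints B ⊆ (dom(B) → Fin q) with finite domains dom(B) ⊆ X. Define p = max over B ∈ 𝓑 of |B|/q^{|dom(B)|} and d = max over B ∈ 𝓑 of the number of B' ∈ 𝓑 with B' ≠ B and dom(B') ∩ dom(B) ≠ ∅. If p·(d+1) ≤ 1/e, then there exists a coloring f : X → Fin q such that for every B ∈ 𝓑, the restriction of f to dom(B) does not belong to B. -/

import Mathlib

/-- A constraint on `X` with range `q`: a finite domain together with a set of
"forbidden" colorings of that domain. -/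
structure Constraint (X : Type*) (q : ℕ) where
  dom : Finset X
  bad : Finset ({x // x ∈ dom} → Fin q)

namespace Constraint

/-- The probability `P[B] = |B| / q^{|dom B|}` of a constraint. -/
noncomputable def prob {X : Type*} {q : ℕ} (B : Constraint X q) : ℝ :=
  (B.bad.card : ℝ) / (q : ℝ) ^ B.dom.card

/-- A coloring `f` violates `B` if its restriction to `dom B` lies in `B.bad`. -/
def Violates {X : Type*} {q : ℕ} (f : X → Fin q) (B : Constraint X q) : Prop :=
  (fun x : {x // x ∈ B.dom} => f x) ∈ B.bad

end Constraint

section LLLAux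

open Finset

attribute [local instance] Classical.propDecidable

variable {X : Type*} [Fintype X] [DecidableEq X]
    {ι : Type*} [Fintype ι] [DecidableEq ι] {q : ℕ}

lemma violates_congr (B : Constraint X q) {f g : X → Fin q}
    (h : ∀ x ∈ B.dom, f x = g x) :
    Constraint.Violates f B ↔ Constraint.Violates g B := by
  unfold Constraint.Violates
  have : (fun x : {x // x ∈ B.dom} => f x) = fun x : {x // x ∈ B.dom} => g x :=
    funext fun x => h x x.2
  rw [this]

/-- The set of colorings satisfying all constraints indexed by `S`. -/
noncomputable def llGood (𝓑 : ι → Constraint X q) (S : Finset ι) : Finset (X → Fin q) :=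
  univ.filter (fun f => ∀ j ∈ S, ¬ Constraint.Violates f (𝓑 j))

lemma llGood_anti (𝓑 : ι → Constraint X q) {S T : Finset ι} (h : S ⊆ T) :
    llGood 𝓑 T ⊆ llGood 𝓑 S := by
  intro f hf
  simp only [llGood, mem_filter, mem_univ, true_and] at hf ⊢
  exact fun j hj => hf j (h hj)

/-- Independence: if every constraint in `S` has domain disjoint from that of `𝓑 i`,
then the number of colorings that are good for `S` and violate `𝓑 i` factors. -/
lemma llIndep (𝓑 : ι → Constraint X q) (hq : 0 < q) (i : ι) (S : Finset ι)
    (hS : ∀ j ∈ S, Disjoint ((𝓑 j).dom) ((𝓑 i).dom)) :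
    ((llGood 𝓑 S).filter (fun f => Constraint.Violates f (𝓑 i))).card * q ^ (𝓑 i).dom.card
      = (𝓑 i).bad.card * (llGood 𝓑 S).card := by
  classical
  set D := (𝓑 i).dom with hD
  let e : (X → Fin q) ≃ ({x // x ∈ D} → Fin q) × ({x // ¬ x ∈ D} → Fin q) :=
    Equiv.piEquivPiSubtypeProd (fun x => x ∈ D) (fun _ => Fin q)
  have hrestr : ∀ (a : {x // x ∈ D} → Fin q) (b : {x // ¬ x ∈ D} → Fin q),
      (fun x : {x // x ∈ (𝓑 i).dom} => e.symm (a, b) x) = a := by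
    intro a b
    funext x
    have hx : (x : X) ∈ D := x.2
    simp [e, Equiv.piEquivPiSubtypeProd, hx]
  have fact1 : ∀ (a : {x // x ∈ D} → Fin q) (b : {x // ¬ x ∈ D} → Fin q),
      Constraint.Violates (e.symm (a, b)) (𝓑 i) ↔ a ∈ (𝓑 i).bad := by
    intro a b
    unfold Constraint.Violates
    rw [hrestr a b]
  have fact2 : ∀ (a a' : {x // x ∈ D} → Fin q) (b : {x // ¬ x ∈ D} → Fin q),
      ∀ j ∈ S, (Constraint.Violates (e.symm (a, b)) (𝓑 j)
        ↔ Constraint.Violates (e.symm (a', b)) (𝓑 j)) := by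
    intro a a' b j hj
    apply violates_congr
    intro x hx
    have hxD : ¬ x ∈ D := Finset.disjoint_left.1 (hS j hj) hx
    simp [e, Equiv.piEquivPiSubtypeProd, hxD]
  -- a default element of the first factor
  have : Nonempty (Fin q) := ⟨⟨0, hq⟩⟩
  obtain ⟨a₀⟩ : Nonempty ({x // x ∈ D} → Fin q) := Nonempty.intro (fun _ => Classical.arbitrary _)
  set Q : ({x // ¬ x ∈ D} → Fin q) → Prop :=
    fun b => ∀ j ∈ S, ¬ Constraint.Violates (e.symm (a₀, b)) (𝓑 j) with hQ
  have goodIff : ∀ (a : {x // x ∈ D} → Fin q) (b : {x // ¬ x ∈ D} → Fin q),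
      (∀ j ∈ S, ¬ Constraint.Violates (e.symm (a, b)) (𝓑 j)) ↔ Q b := by
    intro a b
    constructor
    · intro h j hj
      exact fun hv => h j hj ((fact2 a₀ a b j hj).mp hv)
    · intro h j hj
      exact fun hv => h j hj ((fact2 a a₀ b j hj).mp hv)
  -- Count the "good and violating" set.
  have card1 : ((llGood 𝓑 S).filter (fun f => Constraint.Violates f (𝓑 i))).card
      = (𝓑 i).bad.card * Fintype.card {b // Q b} := by
    have h1 : ((llGood 𝓑 S).filter (fun f => Constraint.Violates f (𝓑 i)))
        = univ.filter (fun f => (∀ j ∈ S, ¬ Constraint.Violates f (𝓑 j))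
            ∧ Constraint.Violates f (𝓑 i)) := by
      simp [llGood, filter_filter]
    rw [h1, ← Fintype.card_subtype]
    have eA : {f : X → Fin q // (∀ j ∈ S, ¬ Constraint.Violates f (𝓑 j))
          ∧ Constraint.Violates f (𝓑 i)}
        ≃ {ab : ({x // x ∈ D} → Fin q) × ({x // ¬ x ∈ D} → Fin q) //
            (∀ j ∈ S, ¬ Constraint.Violates (e.symm ab) (𝓑 j))
            ∧ Constraint.Violates (e.symm ab) (𝓑 i)} := by
      refine e.subtypeEquiv fun f => ?_
      rw [show e.symm (e f) = f by simp]
    have eB : {ab : ({x // x ∈ D} → Fin q) × ({x // ¬ x ∈ D} → Fin q) //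
            (∀ j ∈ S, ¬ Constraint.Violates (e.symm ab) (𝓑 j))
            ∧ Constraint.Violates (e.symm ab) (𝓑 i)}
        ≃ {ab : ({x // x ∈ D} → Fin q) × ({x // ¬ x ∈ D} → Fin q) //
            ab.1 ∈ (𝓑 i).bad ∧ Q ab.2} := by
      refine Equiv.subtypeEquivRight ?_
      rintro ⟨a, b⟩
      simp only
      rw [goodIff a b, fact1 a b, and_comm]
    have e2 : {f : X → Fin q // (∀ j ∈ S, ¬ Constraint.Violates f (𝓑 j))
          ∧ Constraint.Violates f (𝓑 i)}
        ≃ {a // a ∈ (𝓑 i).bad} × {b // Q b} :=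
      (eA.trans eB).trans Equiv.subtypeProdEquivProd
    rw [Fintype.card_congr e2, Fintype.card_prod, Fintype.card_coe]
  -- Count the "good" set.
  have card2 : (llGood 𝓑 S).card = q ^ D.card * Fintype.card {b // Q b} := by
    have h1 : llGood 𝓑 S = univ.filter (fun f => ∀ j ∈ S, ¬ Constraint.Violates f (𝓑 j)) := rfl
    rw [h1, ← Fintype.card_subtype]
    have eA : {f : X → Fin q // ∀ j ∈ S, ¬ Constraint.Violates f (𝓑 j)}
        ≃ {ab : ({x // x ∈ D} → Fin q) × ({x // ¬ x ∈ D} → Fin q) //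
            ∀ j ∈ S, ¬ Constraint.Violates (e.symm ab) (𝓑 j)} := by
      refine e.subtypeEquiv fun f => ?_
      rw [show e.symm (e f) = f by simp]
    have eB : {ab : ({x // x ∈ D} → Fin q) × ({x // ¬ x ∈ D} → Fin q) //
            ∀ j ∈ S, ¬ Constraint.Violates (e.symm ab) (𝓑 j)}
        ≃ {ab : ({x // x ∈ D} → Fin q) × ({x // ¬ x ∈ D} → Fin q) //
            True ∧ Q ab.2} := by
      refine Equiv.subtypeEquivRight ?_
      rintro ⟨a, b⟩
      simp only [true_and]
      rw [goodIff a b]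
    have e2 : {f : X → Fin q // ∀ j ∈ S, ¬ Constraint.Violates f (𝓑 j)}
        ≃ {a : {x // x ∈ D} → Fin q // True} × {b // Q b} :=
      (eA.trans eB).trans (@Equiv.subtypeProdEquivProd _ _ (fun _ => True) Q)
    rw [Fintype.card_congr e2, Fintype.card_prod]
    congr 1
    rw [Fintype.card_congr (Equiv.subtypeUnivEquiv (fun _ => trivial)), Fintype.card_fun,
      Fintype.card_fin, Fintype.card_coe]
  rw [card1, card2]
  ring

/-- The main inductive step of the local lemma. -/
lemma llMain (𝓑 : ι → Constraint X q) (hq : 0 < q) (x p : ℝ) (d : ℕ)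
    (hx0 : 0 ≤ x) (hx1 : x < 1)
    (hp : ∀ i, (𝓑 i).prob ≤ p) (hpx : p ≤ x * (1 - x) ^ d)
    (hd : ∀ i, (Finset.univ.filter
        (fun j => j ≠ i ∧ ((𝓑 j).dom ∩ (𝓑 i).dom).Nonempty)).card ≤ d) :
    ∀ (S : Finset ι) (i : ι),
      (1 - x) * ((llGood 𝓑 S).card : ℝ) ≤ ((llGood 𝓑 (insert i S)).card : ℝ) := by
  classical
  have hx1' : 0 ≤ 1 - x := by linarith
  -- strong induction on the cardinality of S
  suffices H : ∀ n : ℕ, ∀ S : Finset ι, S.card = n → ∀ i : ι,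
      (1 - x) * ((llGood 𝓑 S).card : ℝ) ≤ ((llGood 𝓑 (insert i S)).card : ℝ) by
    intro S i; exact H S.card S rfl i
  intro n
  induction n using Nat.strong_induction_on with
  | _ n IH =>
    intro S hScard i
    by_cases hiS : i ∈ S
    · rw [Finset.insert_eq_self.2 hiS]
      have h0 : (0:ℝ) ≤ ((llGood 𝓑 S).card : ℝ) := Nat.cast_nonneg _
      nlinarith
    · -- the neighbours of i inside S, and the rest
      set Γ : Finset ι := S.filter (fun j => ((𝓑 j).dom ∩ (𝓑 i).dom).Nonempty) with hΓ
      set S' : Finset ι := S \ Γ with hS'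
      have hΓsub : Γ ⊆ S := filter_subset _ _
      have hS'sub : S' ⊆ S := sdiff_subset
      have hunion : S' ∪ Γ = S := sdiff_union_of_subset hΓsub
      have hΓd : Γ.card ≤ d := by
        refine le_trans (Finset.card_le_card ?_) (hd i)
        intro j hj
        simp only [hΓ, mem_filter, mem_univ, true_and] at hj ⊢
        exact ⟨fun h => hiS (h ▸ hj.1), hj.2⟩
      have hS'disj : ∀ j ∈ S', Disjoint ((𝓑 j).dom) ((𝓑 i).dom) := by
        intro j hj
        rw [hS', mem_sdiff, hΓ, mem_filter] at hj
        rw [Finset.disjoint_iff_inter_eq_empty]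
        by_contra h
        exact hj.2 ⟨hj.1, Finset.nonempty_iff_ne_empty.2 h⟩
      -- build-up: N S ≥ (1-x)^|Γ| * N S'
      have hbuild : ∀ G : Finset ι, G ⊆ Γ →
          (1 - x) ^ G.card * ((llGood 𝓑 S').card : ℝ) ≤ ((llGood 𝓑 (S' ∪ G)).card : ℝ) := by
        intro G
        induction G using Finset.induction_on with
        | empty => intro _; simp
        | @insert j G hjG IHg =>
          intro hins
          have hjΓ : j ∈ Γ := hins (Finset.mem_insert_self j G)
          have hGsub : G ⊆ Γ := fun k hk => hins (Finset.mem_insert_of_mem hk)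
          have hjS : j ∈ S := hΓsub hjΓ
          have hjS' : j ∉ S' := by
            rw [hS', mem_sdiff]; exact fun h => h.2 hjΓ
          have hjU : j ∉ S' ∪ G := by
            rw [Finset.mem_union]; rintro (h | h); exacts [hjS' h, hjG h]
          have hsuberase : S' ∪ G ⊆ S.erase j := by
            intro k hk
            rw [Finset.mem_erase]
            refine ⟨fun h => hjU (h ▸ hk), ?_⟩
            rcases Finset.mem_union.1 hk with h | h
            exacts [hS'sub h, hΓsub (hGsub h)]
          have hcardlt : (S' ∪ G).card < n := by
            calc (S' ∪ G).card ≤ (S.erase j).card := Finset.card_le_card hsuberase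
              _ < S.card := Finset.card_erase_lt_of_mem hjS
              _ = n := hScard
          have hstep := IH _ hcardlt (S' ∪ G) rfl j
          rw [← Finset.union_insert] at hstep
          calc (1 - x) ^ (insert j G).card * ((llGood 𝓑 S').card : ℝ)
              = (1 - x) * ((1 - x) ^ G.card * ((llGood 𝓑 S').card : ℝ)) := by
                rw [Finset.card_insert_of_notMem hjG]; ring
            _ ≤ (1 - x) * ((llGood 𝓑 (S' ∪ G)).card : ℝ) :=
                mul_le_mul_of_nonneg_left (IHg hGsub) hx1'
            _ ≤ ((llGood 𝓑 (S' ∪ insert j G)).card : ℝ) := hstep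
      have hbuildΓ : (1 - x) ^ Γ.card * ((llGood 𝓑 S').card : ℝ) ≤ ((llGood 𝓑 S).card : ℝ) := by
        have := hbuild Γ (Finset.Subset.refl Γ)
        rwa [hunion] at this
      -- counting identities
      have heq1 : ((llGood 𝓑 S).card : ℝ)
          = ((llGood 𝓑 (insert i S)).card : ℝ)
            + (((llGood 𝓑 S).filter (fun f => Constraint.Violates f (𝓑 i))).card : ℝ) := by
        have h2 : llGood 𝓑 (insert i S)
            = (llGood 𝓑 S).filter (fun f => ¬ Constraint.Violates f (𝓑 i)) := by
          ext f
          simp only [llGood, mem_filter, mem_univ, true_and, Finset.mem_insert]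
          constructor
          · intro h
            exact ⟨fun j hj => h j (Or.inr hj), h i (Or.inl rfl)⟩
          · rintro ⟨h1, h2⟩ j hj
            rcases hj with rfl | hj
            exacts [h2, h1 j hj]
        rw [h2]
        rw [← Nat.cast_add]
        norm_cast
        rw [add_comm]
        exact (Finset.card_filter_add_card_filter_not _).symm
      have hle2 : (((llGood 𝓑 S).filter (fun f => Constraint.Violates f (𝓑 i))).card : ℝ)
          ≤ (((llGood 𝓑 S').filter (fun f => Constraint.Violates f (𝓑 i))).card : ℝ) := by
        exact_mod_cast Finset.card_le_card
          (Finset.filter_subset_filter _ (llGood_anti 𝓑 hS'sub))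
      have hindep := llIndep 𝓑 hq i S' hS'disj
      have hqpos : (0:ℝ) < (q:ℝ) ^ (𝓑 i).dom.card := by positivity
      have hviol : (((llGood 𝓑 S').filter (fun f => Constraint.Violates f (𝓑 i))).card : ℝ)
          = (𝓑 i).prob * ((llGood 𝓑 S').card : ℝ) := by
        have : (((llGood 𝓑 S').filter (fun f => Constraint.Violates f (𝓑 i))).card : ℝ)
            * ((q:ℝ) ^ (𝓑 i).dom.card)
            = ((𝓑 i).bad.card : ℝ) * ((llGood 𝓑 S').card : ℝ) := by
          exact_mod_cast congrArg (fun m : ℕ => (m : ℝ)) hindep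
        rw [Constraint.prob]
        field_simp
        linarith [this]
      have hNS'0 : (0:ℝ) ≤ ((llGood 𝓑 S').card : ℝ) := Nat.cast_nonneg _
      have hchain : (((llGood 𝓑 S').filter (fun f => Constraint.Violates f (𝓑 i))).card : ℝ)
          ≤ x * ((llGood 𝓑 S).card : ℝ) := by
        calc (((llGood 𝓑 S').filter (fun f => Constraint.Violates f (𝓑 i))).card : ℝ)
            = (𝓑 i).prob * ((llGood 𝓑 S').card : ℝ) := hviol
          _ ≤ p * ((llGood 𝓑 S').card : ℝ) := mul_le_mul_of_nonneg_right (hp i) hNS'0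
          _ ≤ (x * (1 - x) ^ d) * ((llGood 𝓑 S').card : ℝ) :=
              mul_le_mul_of_nonneg_right hpx hNS'0
          _ ≤ (x * (1 - x) ^ Γ.card) * ((llGood 𝓑 S').card : ℝ) := by
              apply mul_le_mul_of_nonneg_right _ hNS'0
              apply mul_le_mul_of_nonneg_left _ hx0
              exact pow_le_pow_of_le_one hx1' (by linarith) hΓd
          _ = x * ((1 - x) ^ Γ.card * ((llGood 𝓑 S').card : ℝ)) := by ring
          _ ≤ x * ((llGood 𝓑 S).card : ℝ) := mul_le_mul_of_nonneg_left hbuildΓ hx0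
      linarith
end LLLAux

/-- Lovász Local Lemma (variable version, finite symmetric form).
If every constraint has probability at most `p`, every constraint's domain meets
the domains of at most `d` other constraints, and `p (d+1) ≤ 1/e`, then there is
a coloring satisfying (i.e. not violating) all constraints. -/
theorem stmt_1 {X : Type*} [Fintype X] [DecidableEq X]
    {ι : Type*} [Fintype ι] [DecidableEq ι]
    (q : ℕ) (hq : 1 ≤ q) (𝓑 : ι → Constraint X q) (p : ℝ) (d : ℕ)
    (hp : ∀ i, (𝓑 i).prob ≤ p)
    (hd : ∀ i, (Finset.univ.filter
        (fun j => j ≠ i ∧ ((𝓑 j).dom ∩ (𝓑 i).dom).Nonempty)).card ≤ d)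
    (hcond : p * (d + 1) ≤ 1 / Real.exp 1) :
    ∃ f : X → Fin q, ∀ i, ¬ Constraint.Violates f (𝓑 i) := by
  classical
  have hq0 : 0 < q := hq
  have hFq : Nonempty (Fin q) := ⟨⟨0, hq0⟩⟩
  cases isEmpty_or_nonempty ι with
  | inl h =>
    exact ⟨fun _ => Classical.arbitrary _, fun i => (h.false i).elim⟩
  | inr hne =>
    have hexp1 : (0:ℝ) < Real.exp 1 := Real.exp_pos 1
    -- choose the parameter x
    set x : ℝ := if d = 0 then 1/2 else 1 / (d + 1) with hx
    have hx0 : 0 ≤ x := by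
      rw [hx]; split <;> positivity
    have hx1 : x < 1 := by
      rw [hx]; split
      · norm_num
      · rw [div_lt_one (by positivity)]
        have : (1:ℝ) ≤ (d:ℝ) := by
          exact_mod_cast Nat.one_le_iff_ne_zero.2 ‹d ≠ 0›
        linarith
    have hpx : p ≤ x * (1 - x) ^ d := by
      rcases Nat.eq_zero_or_pos d with hd0 | hdpos
      · subst hd0
        simp only [hx, if_pos rfl]
        have h2 : (2:ℝ) ≤ Real.exp 1 := by
          have := Real.add_one_le_exp (1:ℝ)
          linarith
        have : p * 1 ≤ 1 / Real.exp 1 := by simpa using hcond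
        have : p ≤ 1 / Real.exp 1 := by linarith
        have h12 : 1 / Real.exp 1 ≤ 1/2 := by
          rw [div_le_div_iff₀ hexp1 (by norm_num)]
          linarith
        norm_num
        linarith
      · have hdne : d ≠ 0 := Nat.pos_iff_ne_zero.1 hdpos
        simp only [hx, if_neg hdne]
        have hd1 : (1:ℝ) ≤ (d:ℝ) := by exact_mod_cast hdpos
        have hdd : (0:ℝ) < (d:ℝ) + 1 := by linarith
        have h1x : 1 - 1 / ((d:ℝ) + 1) = (d:ℝ) / ((d:ℝ) + 1) := by
          field_simp
          ring
        rw [h1x]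
        -- key: (d/(d+1))^d ≥ 1/e
        have hkey : 1 / Real.exp 1 ≤ ((d:ℝ) / ((d:ℝ) + 1)) ^ d := by
          have hstep : (1:ℝ) + 1/(d:ℝ) ≤ Real.exp (1/(d:ℝ)) := by
            have := Real.add_one_le_exp (1/(d:ℝ))
            linarith
          have hpow : ((1:ℝ) + 1/(d:ℝ)) ^ d ≤ (Real.exp (1/(d:ℝ))) ^ d := by
            apply pow_le_pow_left₀ (by positivity) hstep
          have hexp : (Real.exp (1/(d:ℝ))) ^ d = Real.exp 1 := by
            rw [← Real.exp_nat_mul]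
            congr 1
            field_simp
          rw [hexp] at hpow
          have hid : ((d:ℝ) + 1) / (d:ℝ) = (1:ℝ) + 1/(d:ℝ) := by
            field_simp
          have hfrac : ((d:ℝ) / ((d:ℝ) + 1)) ^ d = 1 / ((((d:ℝ)+1) / (d:ℝ)) ^ d) := by
            rw [one_div, ← inv_pow, inv_div]
          rw [hfrac, hid]
          apply div_le_div_of_nonneg_left (by norm_num) (by positivity)
          exact hpow
        have hpe : p ≤ 1 / (Real.exp 1 * ((d:ℝ) + 1)) := by
          rw [le_div_iff₀ (by positivity)]
          calc p * (Real.exp 1 * ((d:ℝ) + 1)) = (p * ((d:ℝ)+1)) * Real.exp 1 := by ring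
            _ ≤ (1 / Real.exp 1) * Real.exp 1 := by
                apply mul_le_mul_of_nonneg_right _ (le_of_lt hexp1)
                exact_mod_cast hcond
            _ = 1 := by field_simp
        calc p ≤ 1 / (Real.exp 1 * ((d:ℝ) + 1)) := hpe
          _ = (1 / ((d:ℝ)+1)) * (1 / Real.exp 1) := by field_simp
          _ ≤ (1 / ((d:ℝ)+1)) * ((d:ℝ) / ((d:ℝ) + 1)) ^ d := by
              apply mul_le_mul_of_nonneg_left hkey (by positivity)
    have hmain := llMain 𝓑 hq0 x p d hx0 hx1 hp hpx hd
    -- build up over all of ι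
    have hbuild : ∀ S : Finset ι,
        (1 - x) ^ S.card * ((llGood 𝓑 (∅ : Finset ι)).card : ℝ)
          ≤ ((llGood 𝓑 S).card : ℝ) := by
      intro S
      induction S using Finset.induction_on with
      | empty => simp
      | @insert j G hjG IHg =>
        calc (1 - x) ^ (insert j G).card * ((llGood 𝓑 (∅ : Finset ι)).card : ℝ)
            = (1 - x) * ((1 - x) ^ G.card * ((llGood 𝓑 (∅ : Finset ι)).card : ℝ)) := by
              rw [Finset.card_insert_of_notMem hjG]; ring
          _ ≤ (1 - x) * ((llGood 𝓑 G).card : ℝ) :=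
              mul_le_mul_of_nonneg_left IHg (by linarith)
          _ ≤ ((llGood 𝓑 (insert j G)).card : ℝ) := hmain G j
    have hempty : (llGood 𝓑 (∅ : Finset ι)).card = q ^ Fintype.card X := by
      have : llGood 𝓑 (∅ : Finset ι) = Finset.univ := by
        ext f; simp [llGood]
      rw [this, Finset.card_univ, Fintype.card_fun, Fintype.card_fin]
    have hpos : (0:ℝ) < ((llGood 𝓑 (Finset.univ : Finset ι)).card : ℝ) := by
      refine lt_of_lt_of_le ?_ (hbuild Finset.univ)
      rw [hempty]
      have h1 : (0:ℝ) < (1 - x) ^ (Finset.univ : Finset ι).card := pow_pos (by linarith) _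
      have h2 : (0:ℝ) < ((q ^ Fintype.card X : ℕ) : ℝ) := by
        have : 0 < q ^ Fintype.card X := Nat.pow_pos hq0
        exact_mod_cast this
      positivity
    have hcard : 0 < (llGood 𝓑 (Finset.univ : Finset ι)).card := by exact_mod_cast hpos
    obtain ⟨f, hf⟩ := Finset.card_pos.1 hcard
    refine ⟨f, fun i => ?_⟩
    simp only [llGood, Finset.mem_filter, Finset.mem_univ, true_and] at hf
    exact hf i trivial
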